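/- arXiv:2512.24467 — 10 statements merged into one kernel-verified Lean document; each statement's English description precedes it below -/
import Mathlib

section
/- Every divisiveness selection function that satisfies both Anonymity and Neutrality must also satisfy Uniformity. -/
open scoped Classical

/-- A preference: a strict linear order on the set `X` of proposals, represented as a
ranking, i.e., a bijection assigning to every proposal its position (position `0` = top). -/
abbrev Pref (X : Type) [Fintype X] : Type := X ≃ Fin (Fintype.card X)

/-- A profile: a finite nonempty electorate `N ⊂ ℕ` together with a preference for each agent. -/
structure Profile (X : Type) [Fintype X] : Type where
  agents : Finset ℕ
  agents_nonempty : agents.Nonempty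
  pref : (i : ℕ) → i ∈ agents → Pref X

namespace Profile

variable {X : Type} [Fintype X]

/-- The position of proposal `x` in agent `i`'s ranking (top position is `1`). -/
def pos (R : Profile X) (i : ℕ) (hi : i ∈ R.agents) (x : X) : ℕ :=
  (R.pref i hi x : ℕ) + 1

/-- The profile `R ∘ σ`, obtained by relabelling agents via a bijection `σ : ℕ ≃ ℕ`;
it is defined on `σ⁻¹(N)`. -/
def comp (R : Profile X) (σ : ℕ ≃ ℕ) : Profile X where
  agents := R.agents.map σ.symm.toEmbedding
  agents_nonempty := by simpa using R.agents_nonempty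
  pref i hi := R.pref (σ i) (by
    obtain ⟨j, hj, hij⟩ := Finset.mem_map.mp hi
    simp only [Equiv.coe_toEmbedding] at hij
    subst hij
    simpa using hj)

/-- The profile `σ(R)`, obtained by applying a permutation `σ : X ≃ X` of the proposals
pointwise to every ranking (the position of `σ x` in `σ(R)` is the position of `x` in `R`). -/
def permute (R : Profile X) (σ : X ≃ X) : Profile X where
  agents := R.agents
  agents_nonempty := R.agents_nonempty
  pref i hi := σ.symm.trans (R.pref i hi)

/-- The profile obtained from `R` by inverting every agent's ranking. -/
def invert (R : Profile X) : Profile X where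
  agents := R.agents
  agents_nonempty := R.agents_nonempty
  pref i hi := (R.pref i hi).trans Fin.revPerm

/-- The profile `R^x̂`, obtained from `R` by moving proposal `x` to the top of every
agent's ranking (leaving the relative order of all other proposals unchanged). -/
def moveTop (R : Profile X) (x : X) : Profile X where
  agents := R.agents
  agents_nonempty := R.agents_nonempty
  pref i hi := (R.pref i hi).trans (Fin.cycleRange (R.pref i hi x))

/-- The restriction `R|_C` of profile `R` to a nonempty coalition `C ⊆ N`. -/
def restrict (R : Profile X) (C : Finset ℕ) (hne : C.Nonempty) (hsub : C ⊆ R.agents) :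
    Profile X where
  agents := C
  agents_nonempty := hne
  pref i hi := R.pref i (hsub hi)

/-- The union `R ⊕ R'` of two profiles with disjoint electorates. -/
def union (R R' : Profile X) (_h : Disjoint R.agents R'.agents) : Profile X where
  agents := R.agents ∪ R'.agents
  agents_nonempty := R.agents_nonempty.mono Finset.subset_union_left
  pref i hi :=
    if h1 : i ∈ R.agents then R.pref i h1
    else R'.pref i ((Finset.mem_union.mp hi).resolve_left h1)

/-- The number of agents in `R` reporting the preference `r`. -/
noncomputable def count (R : Profile X) (r : Pref X) : ℕ :=
  (R.agents.attach.filter fun i => R.pref i.1 i.2 = r).card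

/-- A profile is perfectly uniform if each possible preference occurs equally often in it. -/
def IsUniform (R : Profile X) : Prop := ∃ k : ℕ, ∀ r : Pref X, R.count r = k

/-- A profile is unanimous if all agents report the same ranking. -/
def IsUnanimous (R : Profile X) : Prop :=
  ∀ i (hi : i ∈ R.agents) j (hj : j ∈ R.agents), R.pref i hi = R.pref j hj

/-- Proposal `x` occurs in the same position in every agent's ranking in `R`. -/
def SamePos (R : Profile X) (x : X) : Prop :=
  ∀ i (hi : i ∈ R.agents) j (hj : j ∈ R.agents), R.pref i hi x = R.pref j hj x

/-- Proposal `x` is Pareto-dominated in `R`: some proposal `y` is ranked above `x`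
by every agent. -/
def ParetoDominated (R : Profile X) (x : X) : Prop :=
  ∃ y : X, ∀ i (hi : i ∈ R.agents), R.pref i hi y < R.pref i hi x

/-- Proposals `x` and `y` are clones in `R`: they are distinct and appear adjacent to one
another in every agent's ranking. -/
def Clones (R : Profile X) (x y : X) : Prop :=
  x ≠ y ∧ ∀ i (hi : i ∈ R.agents),
    (R.pref i hi x : ℕ) + 1 = (R.pref i hi y : ℕ) ∨
    (R.pref i hi y : ℕ) + 1 = (R.pref i hi x : ℕ)

end Profile

section Axioms

variable {X : Type} [Fintype X]

/-- A DSF (here: any map from profiles to sets of proposals) is proper if it always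
returns a nonempty set of proposals. -/
def IsDSF (Δ : Profile X → Set X) : Prop := ∀ R : Profile X, (Δ R).Nonempty

/-- Anonymity: `Δ(R) = Δ(R ∘ σ)` for every profile `R` and bijection `σ : ℕ ≃ ℕ`. -/
def Anonymity (Δ : Profile X → Set X) : Prop :=
  ∀ (R : Profile X) (σ : ℕ ≃ ℕ), Δ R = Δ (R.comp σ)

/-- Neutrality: `Δ(σ(R)) = σ(Δ(R))` for every profile `R` and permutation `σ : X ≃ X`. -/
def Neutrality (Δ : Profile X → Set X) : Prop :=
  ∀ (R : Profile X) (σ : X ≃ X), Δ (R.permute σ) = σ '' Δ R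

/-- Uniformity: `Δ(R) = X` for every perfectly uniform profile `R`. -/
def Uniformity (Δ : Profile X → Set X) : Prop :=
  ∀ R : Profile X, R.IsUniform → Δ R = Set.univ

/-- Weak Position Unanimity: if `x` occurs in the same position in every agent's ranking
in `R`, then `x ∉ Δ(R)` or `Δ(R) = X`. -/
def WeakPositionUnanimity (Δ : Profile X → Set X) : Prop :=
  ∀ (R : Profile X) (x : X), R.SamePos x → x ∉ Δ R ∨ Δ R = Set.univ

/-- Position Unanimity: if `R` is not unanimous and `x` occurs in the same position in
every agent's ranking in `R`, then `x ∉ Δ(R)`. -/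
def PositionUnanimity (Δ : Profile X → Set X) : Prop :=
  ∀ (R : Profile X) (x : X), ¬ R.IsUnanimous → R.SamePos x → x ∉ Δ R

/-- Pareto Efficiency: Pareto-dominated proposals are never selected. -/
def ParetoEfficiency (Δ : Profile X → Set X) : Prop :=
  ∀ (R : Profile X) (x : X), R.ParetoDominated x → x ∉ Δ R

/-- Weak Pareto Efficiency: for every Pareto-dominated proposal `x` of a profile `R`,
either `x ∉ Δ(R)` or `Δ(R) = X`. -/
def WeakParetoEfficiency (Δ : Profile X → Set X) : Prop :=
  ∀ (R : Profile X) (x : X), R.ParetoDominated x → x ∉ Δ R ∨ Δ R = Set.univ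

/-- Inversion Invariance: `Δ(R) = Δ(R')` whenever `R'` is obtained from `R` by inverting
every agent's ranking. -/
def InversionInvariance (Δ : Profile X → Set X) : Prop :=
  ∀ R : Profile X, Δ R = Δ R.invert

/-- Clone Consistency: if `x` and `x'` are clones in `R`, `x` and `y` are not clones in `R`,
and `{x,y} ⊆ Δ(R)`, then `x' ∈ Δ(R)`. -/
def CloneConsistency (Δ : Profile X → Set X) : Prop :=
  ∀ (R : Profile X) (x x' y : X), R.Clones x x' → ¬ R.Clones x y →
    x ∈ Δ R → y ∈ Δ R → x' ∈ Δ R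

/-- Uniform Reinforcement: `Δ(R) = Δ(R ⊕ R^U)` for every profile `R` and every perfectly
uniform profile `R^U` with electorate disjoint from that of `R`. -/
def UniformReinforcement (Δ : Profile X → Set X) : Prop :=
  ∀ (R RU : Profile X) (h : Disjoint R.agents RU.agents),
    RU.IsUniform → Δ R = Δ (R.union RU h)

end Axioms
section Score

variable {X : Type} [Fintype X]

/-- A scoring function `s` is normalised positional if it is induced by a scoring vector
`(s_1, ..., s_m)`: `s(R|_C, x) = (1/|C|) · Σ_{i ∈ C} s_{pos_i(x)}`. -/
def IsNormPositional (s : Profile X → X → ℝ) : Prop :=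
  ∃ v : Fin (Fintype.card X) → ℝ, ∀ (R : Profile X) (x : X),
    s R x = (∑ i ∈ R.agents.attach, v (R.pref i.1 i.2 x)) / R.agents.card

/-- `div_s(R, x, C, C̄)`: the absolute difference of the scores of `x` in the restrictions
of `R` to `C` and to its complement `C̄ = N \ C` (and `0` if either part is empty). -/
noncomputable def divScore (s : Profile X → X → ℝ) (R : Profile X) (x : X) (C : Finset ℕ) : ℝ :=
  if h : C ⊆ R.agents ∧ C.Nonempty ∧ (R.agents \ C).Nonempty then
    |s (R.restrict C h.2.1 h.1) x -
      s (R.restrict (R.agents \ C) h.2.2 Finset.sdiff_subset) x|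
  else 0

/-- `p` is an array of probability distributions over decompositions of the electorate:
for each profile `R` and proposal `x`, `p R x` is nonnegative and the values `p R x C`
over all `C ⊆ N` sum to `1`.  (Each unordered decomposition `{C, C̄}` thus receives
probability `p R x C + p R x C̄`.) -/
def IsDecompDist (p : Profile X → X → Finset ℕ → ℝ) : Prop :=
  ∀ (R : Profile X) (x : X),
    (∀ C, 0 ≤ p R x C) ∧ (∑ C ∈ R.agents.powerset, p R x C) = 1

/-- The score-based DSF `Δ^p_s`: it selects the proposals maximising the expected
score difference between the two parts of a sampled decomposition of the electorate. -/
noncomputable def scoreDSF (s : Profile X → X → ℝ) (p : Profile X → X → Finset ℕ → ℝ)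
    (R : Profile X) : Set X :=
  {x | ∀ y : X, (∑ C ∈ R.agents.powerset, p R y C * divScore s R y C)
      ≤ ∑ C ∈ R.agents.powerset, p R x C * divScore s R x C}

/-- The normalised Plurality scoring function (scoring vector `(1, 0, ..., 0)`). -/
noncomputable def pluralityScore (R : Profile X) (x : X) : ℝ :=
  ((R.agents.attach.filter fun i => (R.pref i.1 i.2 x : ℕ) = 0).card : ℝ) / R.agents.card

/-- The normalised Borda scoring function (scoring vector `(m-1, m-2, ..., 0)`). -/
noncomputable def normBordaScore (R : Profile X) (x : X) : ℝ :=
  (∑ i ∈ R.agents.attach,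
    ((Fintype.card X : ℝ) - (((R.pref i.1 i.2 x : ℕ) : ℝ) + 1))) / R.agents.card

end Score

section SCF

variable {X : Type} [Fintype X]

/-- A social choice function is Pareto-efficient if it never selects a Pareto-dominated
proposal. -/
def ParetoEfficientSCF (F : Profile X → Finset X) : Prop :=
  ∀ (R : Profile X) (x : X), R.ParetoDominated x → x ∉ F R

/-- `div_F(R, x, C, C̄) = | [x ∈ F(R|_C)]/|F(R|_C)| - [x ∈ F(R|_C̄)]/|F(R|_C̄)| |`
(and `0` if either part of the decomposition is empty). -/
noncomputable def divSCF (F : Profile X → Finset X) (R : Profile X) (x : X) (C : Finset ℕ) : ℝ :=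
  if h : C ⊆ R.agents ∧ C.Nonempty ∧ (R.agents \ C).Nonempty then
    |(if x ∈ F (R.restrict C h.2.1 h.1) then ((F (R.restrict C h.2.1 h.1)).card : ℝ)⁻¹ else 0) -
      (if x ∈ F (R.restrict (R.agents \ C) h.2.2 Finset.sdiff_subset) then
        ((F (R.restrict (R.agents \ C) h.2.2 Finset.sdiff_subset)).card : ℝ)⁻¹ else 0)|
  else 0

/-- The SCF-based DSF `Δ^p_F`. -/
noncomputable def scfDSF (F : Profile X → Finset X) (p : Profile X → X → Finset ℕ → ℝ)
    (R : Profile X) : Set X :=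
  {x | ∀ y : X, (∑ C ∈ R.agents.powerset, p R y C * divSCF F R y C)
      ≤ ∑ C ∈ R.agents.powerset, p R x C * divSCF F R x C}

/-- The Borda score of `x` in `R`: `Σ_{i ∈ N} (m − pos_i(x))`. -/
noncomputable def bordaScore (R : Profile X) (x : X) : ℕ :=
  ∑ i ∈ R.agents.attach, (Fintype.card X - R.pos i.1 i.2 x)

/-- The Borda rule: the SCF selecting the proposals with maximal Borda score. -/
noncomputable def bordaRule (R : Profile X) : Finset X :=
  Finset.univ.filter fun x => ∀ y : X, bordaScore R y ≤ bordaScore R x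

end SCF

section Index

variable {X : Type} [Fintype X]

/-- A profile index function `δ` is neutral if it is invariant under permutations
of the proposals. -/
def NeutralIndex (δ : Profile X → ℝ) : Prop :=
  ∀ (R : Profile X) (σ : X ≃ X), δ (R.permute σ) = δ R

/-- The profile-index-based DSF `Δ_δ`: it selects the proposals `x` minimising `δ(R^x̂)`. -/
noncomputable def indexDSF (δ : Profile X → ℝ) (R : Profile X) : Set X :=
  {x | ∀ y : X, δ (R.moveTop x) ≤ δ (R.moveTop y)}

/-- The Kendall tau distance between two rankings: the number of (unordered) pairs of
distinct proposals on whose relative ranking the two rankings disagree (counted here as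
ordered pairs with a fixed orientation of the disagreement). -/
noncomputable def kendallTau (r r' : Pref X) : ℕ :=
  (Finset.univ.filter fun q : X × X => r q.1 < r q.2 ∧ r' q.2 < r' q.1).card

/-- The average Kendall tau distance over all unordered pairs of distinct agents of the
profile (`0` for single-agent profiles), here computed via ordered pairs. -/
noncomputable def deltaKT (R : Profile X) : ℝ :=
  (∑ i ∈ R.agents.attach, ∑ j ∈ R.agents.attach,
      if i ≠ j then (kendallTau (R.pref i.1 i.2) (R.pref j.1 j.2) : ℝ) else 0) /
    ((R.agents.card : ℝ) * ((R.agents.card : ℝ) - 1))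

end Index

section RankVar

variable {X : Type} [Fintype X]

/-- The mean position `μ^R(x)` of proposal `x` in profile `R`. -/
noncomputable def meanPos (R : Profile X) (x : X) : ℝ :=
  (∑ i ∈ R.agents.attach, (R.pos i.1 i.2 x : ℝ)) / R.agents.card

/-- The variance of the positions at which proposal `x` occurs in profile `R`. -/
noncomputable def rankVar (R : Profile X) (x : X) : ℝ :=
  (∑ i ∈ R.agents.attach, ((R.pos i.1 i.2 x : ℝ) - meanPos R x) ^ 2) / R.agents.card

/-- The rank-variance DSF `Δ_var`. -/
noncomputable def rankVarDSF (R : Profile X) : Set X :=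
  {x | ∀ y : X, rankVar R y ≤ rankVar R x}

end RankVar

section Aux

variable {X : Type} [Fintype X]

theorem Profile.ext' {R S : Profile X} (h : R.agents = S.agents)
    (h2 : ∀ i (hi : i ∈ R.agents) (hj : i ∈ S.agents), R.pref i hi = S.pref i hj) :
    R = S := by
  cases R with
  | mk a na p =>
    cases S with
    | mk a' na' p' =>
      simp only at h
      subst h
      simp only [Profile.mk.injEq, heq_eq_eq, true_and]
      funext i hi
      exact h2 i hi hi

end Aux

/-- Every DSF that satisfies both Anonymity and Neutrality must also
satisfy Uniformity. -/
theorem divisiveness_stmt0 (X : Type) [Fintype X] (hm : 1 ≤ Fintype.card X)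
    (Δ : Profile X → Set X) (hΔ : IsDSF Δ)
    (hA : Anonymity Δ) (hN : Neutrality Δ) :
    Uniformity Δ := by
  intro R hU
  obtain ⟨k, hk⟩ := hU
  -- The key invariance: Δ R is fixed by every permutation of proposals.
  have key : ∀ σ : X ≃ X, σ '' Δ R = Δ R := by
    intro σ
    -- `F a` is the preference of agent `a`.
    set F : {i // i ∈ R.agents} → Pref X := fun a => R.pref a.1 a.2 with hFdef
    -- translation on preferences induced by σ
    have glr : ∀ r : Pref X, σ.trans (σ.symm.trans r) = r := by
      intro r; ext x; simp
    have grl : ∀ r : Pref X, σ.symm.trans (σ.trans r) = r := by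
      intro r; ext x; simp
    set g : Pref X ≃ Pref X :=
      { toFun := fun r => σ.symm.trans r
        invFun := fun r => σ.trans r
        left_inv := glr
        right_inv := grl } with hgdef
    -- every fiber of F has cardinality k
    have hcard : ∀ r : Pref X, Fintype.card {a // F a = r} = k := by
      intro r
      rw [Fintype.card_subtype]
      have := hk r
      unfold Profile.count at this
      rw [← this, Finset.univ_eq_attach]
    -- equivalences between fibers
    have hcc : ∀ r : Pref X, Fintype.card {a // F a = r} = Fintype.card {a // F a = g r} := by
      intro r; rw [hcard, hcard]
    let eFib : ∀ r : Pref X, {a // F a = r} ≃ {a // F a = g r} :=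
      fun r => Fintype.equivOfCardEq (hcc r)
    -- the forward map
    let fwd : {i // i ∈ R.agents} → {i // i ∈ R.agents} :=
      fun a => (eFib (F a) ⟨a, rfl⟩).1
    have hfwdF : ∀ a, F (fwd a) = g (F a) := fun a => (eFib (F a) ⟨a, rfl⟩).2
    have congrFib : ∀ (r r' : Pref X), r = r' → ∀ a (ha : F a = r) (ha' : F a = r'),
        ((eFib r ⟨a, ha⟩ : {b // F b = g r}) : {i // i ∈ R.agents}) =
        ((eFib r' ⟨a, ha'⟩ : {b // F b = g r'}) : {i // i ∈ R.agents}) := by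
      rintro r r' rfl a ha ha'; rfl
    have hinj : Function.Injective fwd := by
      intro a a' h
      have h1 : F a = F a' := by
        apply g.injective
        rw [← hfwdF a, ← hfwdF a', h]
      have h2 : fwd a' = ((eFib (F a) ⟨a', h1.symm⟩ : {b // F b = g (F a)}) :
          {i // i ∈ R.agents}) := (congrFib (F a') (F a) h1.symm a' rfl h1.symm)
      have h3 : (eFib (F a)) ⟨a, rfl⟩ = (eFib (F a)) ⟨a', h1.symm⟩ := by
        apply Subtype.ext
        exact h.trans h2
      have h4 := (eFib (F a)).injective h3
      exact congrArg Subtype.val h4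
    have hbij : Function.Bijective fwd := Finite.injective_iff_bijective.mp hinj
    let e : Equiv.Perm {i // i ∈ R.agents} := Equiv.ofBijective fwd hbij
    have heF : ∀ a, F (e a) = g (F a) := hfwdF
    -- extend to a permutation of ℕ
    let τ : ℕ ≃ ℕ := e.subtypeCongr (Equiv.refl {i // ¬ i ∈ R.agents})
    have hτ_in : ∀ i (hi : i ∈ R.agents), τ i = (e ⟨i, hi⟩ : ℕ) := by
      intro i hi
      exact Equiv.Perm.subtypeCongr.left_apply e (Equiv.refl _) hi
    have hτ_out : ∀ i, i ∉ R.agents → τ i = i := by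
      intro i hi
      have := Equiv.Perm.subtypeCongr.right_apply (ep := e)
        (en := Equiv.refl {i // ¬ i ∈ R.agents}) hi
      simpa using this
    have hτ_mem : ∀ i, τ i ∈ R.agents ↔ i ∈ R.agents := by
      intro i
      by_cases hi : i ∈ R.agents
      · simp only [hi, iff_true]
        rw [hτ_in i hi]; exact (e ⟨i, hi⟩).2
      · simp only [hi, iff_false]
        rw [hτ_out i hi]; exact hi
    -- the permuted profile equals the relabelled profile
    have hprof : R.permute σ = R.comp τ := by
      apply Profile.ext'
      · show R.agents = R.agents.map τ.symm.toEmbedding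
        ext j
        simp only [Finset.mem_map, Equiv.coe_toEmbedding]
        constructor
        · intro hj
          exact ⟨τ j, (hτ_mem j).mpr hj, τ.symm_apply_apply j⟩
        · rintro ⟨i, hi, rfl⟩
          rw [← hτ_mem]
          simpa using hi
      · intro i hi hj
        show σ.symm.trans (R.pref i hi) = R.pref (τ i) _
        have hτi : τ i = ((e ⟨i, hi⟩ : {i // i ∈ R.agents}) : ℕ) := hτ_in i hi
        have hmem : τ i ∈ R.agents := (hτ_mem i).mpr hi
        have : R.pref (τ i) (by
            obtain ⟨j', hj', hij⟩ := Finset.mem_map.mp hj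
            simp only [Equiv.coe_toEmbedding] at hij
            subst hij
            simpa using hj') = F (e ⟨i, hi⟩) := by
          have : ∀ (j : ℕ) (h1 h2 : j ∈ R.agents), R.pref j h1 = R.pref j h2 :=
            fun j h1 h2 => rfl
          rw [show R.pref (τ i) _ = R.pref (τ i) hmem from rfl]
          congr 1
        rw [this, heF]
        rfl
    -- conclude invariance
    have h1 := hN R σ
    have h2 := hA R τ
    rw [hprof, ← h2] at h1
    exact h1.symm
  -- a nonempty set invariant under all permutations is everything
  obtain ⟨x, hx⟩ := hΔ R
  ext y
  simp only [Set.mem_univ, iff_true]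
  have := key (Equiv.swap x y)
  rw [← this]
  exact ⟨x, hx, Equiv.swap_apply_left x y⟩
end

section
/- For every normalised positional scoring function s and every array p of probability distributions over decompositions of the electorate, the score-based DSF Δ^p_s induced by s and p satisfies Weak Position Unanimity. -/
open scoped Classical

/-- For every normalised positional scoring function `s` and every array
`p` of probability distributions over decompositions of the electorate, the score-based
DSF `Δ^p_s` satisfies Weak Position Unanimity. -/
theorem divisiveness_stmt1 (X : Type) [Fintype X]
    (s : Profile X → X → ℝ) (hs : IsNormPositional s)
    (p : Profile X → X → Finset ℕ → ℝ) (hp : IsDecompDist p) :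
    WeakPositionUnanimity (scoreDSF s p) := by
  obtain ⟨v, hv⟩ := hs
  intro R x hsame
  by_cases hx : x ∈ scoreDSF s p R
  · right
    -- divScore of x is always 0
    have hdiv0 : ∀ C, divScore s R x C = 0 := by
      intro C
      unfold divScore
      split
      · next h =>
        obtain ⟨hsub, hC, hCc⟩ := h
        obtain ⟨i0, hi0⟩ := hC
        have key : ∀ (D : Finset ℕ) (hne : D.Nonempty) (hsubD : D ⊆ R.agents),
            s (R.restrict D hne hsubD) x = v (R.pref i0 (hsub hi0) x) := by
          intro D hne hsubD
          rw [hv]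
          have hcongr : ∀ j ∈ (R.restrict D hne hsubD).agents.attach,
              v ((R.restrict D hne hsubD).pref j.1 j.2 x) = v (R.pref i0 (hsub hi0) x) := by
            intro j hj
            congr 1
            exact hsame j.1 (hsubD j.2) i0 (hsub hi0)
          rw [Finset.sum_congr rfl hcongr, Finset.sum_const, Finset.card_attach]
          have hDcard : ((R.restrict D hne hsubD).agents.card : ℝ) ≠ 0 := by
            have : (R.restrict D hne hsubD).agents.card ≠ 0 :=
              Finset.card_ne_zero_of_mem hne.choose_spec
            exact_mod_cast this
          rw [nsmul_eq_mul]
          field_simp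
        rw [key, key]
        simp
      · rfl
    have hsumx : (∑ C ∈ R.agents.powerset, p R x C * divScore s R x C) = 0 := by
      apply Finset.sum_eq_zero
      intro C _
      rw [hdiv0]; ring
    have hnn : ∀ (y : X), 0 ≤ ∑ C ∈ R.agents.powerset, p R y C * divScore s R y C := by
      intro y
      apply Finset.sum_nonneg
      intro C _
      apply mul_nonneg ((hp R y).1 C)
      unfold divScore
      split
      · exact abs_nonneg _
      · exact le_rfl
    have hall0 : ∀ (y : X), (∑ C ∈ R.agents.powerset, p R y C * divScore s R y C) = 0 := by
      intro y
      have h1 := hx y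
      rw [hsumx] at h1
      exact le_antisymm h1 (hnn y)
    ext z
    simp only [Set.mem_univ, iff_true]
    intro y
    rw [hall0 y, hall0 z]
  · left
    exact hx
end

section
/- For every m ≥ 3, the rank-variance DSF Δ_var violates Uniform Reinforcement: there exist a profile R : N → X! and a perfectly uniform profile R^U : N' → X! with N ∩ N' = ∅ such that Δ_var(R) ≠ Δ_var(R ⊕ R^U). -/
open scoped Classical

section AuxStmt2
variable {X : Type} [Fintype X]

lemma sum_pref_swap {M : Type*} [AddCommMonoid M] (f : Fin (Fintype.card X) → M) (x y : X) :
    ∑ r : Pref X, f (r x) = ∑ r : Pref X, f (r y) := by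
  classical
  let φ : Pref X ≃ Pref X :=
    ⟨fun r => (Equiv.swap x y).trans r, fun r => (Equiv.swap x y).trans r,
     fun r => by ext z; simp, fun r => by ext z; simp⟩
  have h := Equiv.sum_comp φ (fun r : Pref X => f (r x))
  have h2 : ∀ r : Pref X, f ((φ r) x) = f (r y) := by
    intro r; simp [φ, Equiv.swap_apply_left]
  calc ∑ r : Pref X, f (r x) = ∑ r : Pref X, f ((φ r) x) := h.symm
    _ = ∑ r : Pref X, f (r y) := by simp only [h2]

lemma two_mul_sum_pref (x : X) :
    2 * ∑ r : Pref X, (r x : ℕ) = Fintype.card (Pref X) * (Fintype.card X - 1) := by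
  classical
  have hm : 0 < Fintype.card X := Fintype.card_pos_iff.mpr ⟨x⟩
  apply Nat.eq_of_mul_eq_mul_left hm
  have h1 : ∑ y : X, (2 * ∑ r : Pref X, (r y : ℕ)) =
      Fintype.card X * (2 * ∑ r : Pref X, (r x : ℕ)) := by
    rw [Finset.sum_congr rfl (fun y _ => by
      rw [sum_pref_swap (fun k : Fin (Fintype.card X) => (k : ℕ)) y x]),
      Finset.sum_const, Finset.card_univ, smul_eq_mul]
  rw [← h1]
  have h2 : ∑ y : X, (2 * ∑ r : Pref X, (r y : ℕ)) =
      2 * ∑ r : Pref X, ∑ y : X, (r y : ℕ) := by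
    rw [← Finset.mul_sum, Finset.sum_comm]
  rw [h2]
  have h3 : ∀ r : Pref X, ∑ y : X, (r y : ℕ) = ∑ k : Fin (Fintype.card X), (k : ℕ) :=
    fun r => Equiv.sum_comp r (fun k : Fin (Fintype.card X) => (k : ℕ))
  rw [Finset.sum_congr rfl (fun r _ => h3 r), Finset.sum_const, Finset.card_univ, smul_eq_mul]
  have h4 : (∑ k : Fin (Fintype.card X), (k : ℕ)) * 2 =
      Fintype.card X * (Fintype.card X - 1) := by
    rw [Fin.sum_univ_eq_sum_range (fun k => k)]
    exact Finset.sum_range_id_mul_two _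
  calc 2 * (Fintype.card (Pref X) * ∑ k : Fin (Fintype.card X), (k : ℕ))
      = Fintype.card (Pref X) * ((∑ k : Fin (Fintype.card X), (k : ℕ)) * 2) := by ring
    _ = _ := by rw [h4]; ring

lemma rankVar_eq (P : Profile X) (x : X) :
    rankVar P x = ((∑ i ∈ P.agents.attach, (P.pos i.1 i.2 x : ℝ) ^ 2) -
      (∑ i ∈ P.agents.attach, (P.pos i.1 i.2 x : ℝ)) ^ 2 / P.agents.card) / P.agents.card := by
  classical
  have hn : (0 : ℝ) < P.agents.card := by
    exact_mod_cast Finset.card_pos.mpr P.agents_nonempty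
  unfold rankVar meanPos
  set n : ℝ := (P.agents.card : ℝ)
  set A : ℝ := ∑ i ∈ P.agents.attach, (P.pos i.1 i.2 x : ℝ) with hA
  have hcard : (P.agents.attach.card : ℝ) = n := by
    rw [Finset.card_attach]
  have expand : ∑ i ∈ P.agents.attach, ((P.pos i.1 i.2 x : ℝ) - A / n) ^ 2 =
      (∑ i ∈ P.agents.attach, (P.pos i.1 i.2 x : ℝ) ^ 2) -
        2 * (A / n) * A + P.agents.attach.card * (A / n) ^ 2 := by
    rw [Finset.sum_congr rfl (fun i _ => sub_sq ((P.pos i.1 i.2 x : ℝ)) (A / n))]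
    rw [Finset.sum_add_distrib, Finset.sum_sub_distrib, Finset.sum_const, nsmul_eq_mul]
    have mid : ∑ i ∈ P.agents.attach, 2 * (P.pos i.1 i.2 x : ℝ) * (A / n) =
        2 * (A / n) * A := by
      rw [Finset.sum_congr rfl (fun i _ => by
        show 2 * (P.pos i.1 i.2 x : ℝ) * (A / n) = (P.pos i.1 i.2 x : ℝ) * (2 * (A / n))
        ring), ← Finset.sum_mul, ← hA]
      ring
    rw [mid]
  rw [expand, hcard]
  field_simp
  ring

end AuxStmt2

/-- For every `m ≥ 3`, the rank-variance DSF `Δ_var` violates Uniform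
Reinforcement: there are a profile `R` and a perfectly uniform profile `R^U` with
disjoint electorate such that `Δ_var(R) ≠ Δ_var(R ⊕ R^U)`. -/
theorem divisiveness_stmt2 (X : Type) [Fintype X] (hm : 3 ≤ Fintype.card X) :
    ∃ (R RU : Profile X) (h : Disjoint R.agents RU.agents),
      RU.IsUniform ∧ rankVarDSF R ≠ rankVarDSF (R.union RU h) := by
  classical
  set m := Fintype.card X with hmdef
  let e0 : X ≃ Fin m := Fintype.equivFin X
  set K := Fintype.card (Pref X) with hKdef
  have hK : 0 < K := Fintype.card_pos_iff.mpr ⟨e0⟩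
  let eP : Pref X ≃ Fin K := Fintype.equivFin (Pref X)
  let emb : ℕ ↪ ℕ := ⟨Nat.succ, Nat.succ_injective⟩
  have hmemRU : ∀ i ∈ (Finset.range K).map emb, i - 1 < K ∧ 1 ≤ i := by
    intro i hi
    obtain ⟨n, hn, rfl⟩ := Finset.mem_map.mp hi
    simp only [Finset.mem_range] at hn
    exact ⟨by simpa [emb] using hn, by simp [emb]⟩
  let R : Profile X := ⟨{0}, ⟨0, Finset.mem_singleton_self 0⟩, fun _ _ => e0⟩
  let RU : Profile X := ⟨(Finset.range K).map emb, ⟨1, by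
      exact Finset.mem_map.mpr ⟨0, Finset.mem_range.mpr hK, rfl⟩⟩,
      fun i hi => eP.symm ⟨i - 1, (hmemRU i hi).1⟩⟩
  have hdisj : Disjoint R.agents RU.agents := by
    rw [Finset.disjoint_left]
    intro a ha hb
    have := (hmemRU a hb).2
    simp only [R, Finset.mem_singleton] at ha
    omega
  refine ⟨R, RU, hdisj, ?_, ?_⟩
  · -- uniform
    refine ⟨1, fun r => ?_⟩
    unfold Profile.count
    rw [Finset.card_eq_one]
    have hmem : ((eP r : ℕ) + 1) ∈ (Finset.range K).map emb :=
      Finset.mem_map.mpr ⟨(eP r : ℕ), Finset.mem_range.mpr (eP r).isLt, rfl⟩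
    refine ⟨⟨(eP r : ℕ) + 1, hmem⟩, ?_⟩
    ext a
    simp only [Finset.mem_filter, Finset.mem_attach, true_and, Finset.mem_singleton]
    constructor
    · intro h
      apply Subtype.ext
      have h2 := congrArg eP h
      rw [Equiv.apply_symm_apply] at h2
      have hv : a.1 - 1 = (eP r : ℕ) := congrArg Fin.val h2
      have h1 := (hmemRU a.1 a.2).2
      show a.1 = (eP r : ℕ) + 1
      omega
    · intro h
      have hv : a.1 = (eP r : ℕ) + 1 := congrArg Subtype.val h
      show eP.symm ⟨a.1 - 1, (hmemRU a.1 a.2).1⟩ = r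
      have : (⟨a.1 - 1, (hmemRU a.1 a.2).1⟩ : Fin K) = eP r := by
        apply Fin.ext; simp [hv]
      rw [this, Equiv.symm_apply_apply]
  · -- main inequality
    set U : Profile X := R.union RU hdisj with hU
    have hUagents : U.agents = {0} ∪ (Finset.range K).map emb := rfl
    have hmemU : ∀ a ∈ RU.agents, a ∈ U.agents := fun a ha =>
      Finset.mem_union_right _ ha
    have h0U : (0 : ℕ) ∈ U.agents := Finset.mem_union_left _ (Finset.mem_singleton_self 0)
    have hcardU : (U.agents.card : ℝ) = K + 1 := by
      rw [hUagents, Finset.card_union_of_disjoint hdisj, Finset.card_singleton,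
        Finset.card_map, Finset.card_range]
      push_cast; ring
    -- sum over RU's agents equals sum over all preferences
    have sumRU : ∀ (f : Fin m → ℝ) (x : X),
        ∑ i ∈ RU.agents.attach, f (RU.pref i.1 i.2 x) = ∑ r : Pref X, f (r x) := by
      intro f x
      apply Finset.sum_bij' (i := fun (a : {y // y ∈ RU.agents}) _ => RU.pref a.1 a.2)
        (j := fun (r : Pref X) _ =>
          (⟨(eP r : ℕ) + 1, Finset.mem_map.mpr ⟨(eP r : ℕ),
            Finset.mem_range.mpr (eP r).isLt, rfl⟩⟩ : {y // y ∈ RU.agents}))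
      · intro a _; exact Finset.mem_univ _
      · intro r _; exact Finset.mem_attach _ _
      · intro a _
        apply Subtype.ext
        show (eP (eP.symm ⟨a.1 - 1, (hmemRU a.1 a.2).1⟩) : ℕ) + 1 = a.1
        rw [Equiv.apply_symm_apply]
        have := (hmemRU a.1 a.2).2
        simp only []
        omega
      · intro r _
        rw [Equiv.symm_apply_eq]
        apply Fin.ext
        simp
      · intro a _; rfl
    -- sum over the union profile
    have sumU : ∀ (f : Fin m → ℝ) (x : X),
        ∑ i ∈ U.agents.attach, f (U.pref i.1 i.2 x) =
          f (e0 x) + ∑ r : Pref X, f (r x) := by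
      intro f x
      set g : ℕ → ℝ := fun a => if h : a ∈ U.agents then f (U.pref a h x) else 0 with hg
      have hne0 : ∀ i ∈ RU.agents, i ∉ R.agents := by
        intro i hi hmem
        have := (hmemRU i hi).2
        simp only [R, Finset.mem_singleton] at hmem
        omega
      have step1 : ∑ i ∈ U.agents.attach, f (U.pref i.1 i.2 x) = ∑ a ∈ U.agents, g a := by
        rw [← Finset.sum_attach U.agents g]
        refine Finset.sum_congr rfl (fun i _ => ?_)
        simp only [hg]
        rw [dif_pos i.2]
      have step2 : ∑ a ∈ U.agents, g a =
          g 0 + ∑ a ∈ RU.agents, g a := by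
        rw [hUagents, Finset.sum_union hdisj, Finset.sum_singleton]
      have hpref0 : U.pref 0 h0U = e0 := by
        simp only [U, Profile.union]
        rw [dif_pos (Finset.mem_singleton_self 0)]
      have step3 : g 0 = f (e0 x) := by
        simp only [hg]
        rw [dif_pos h0U, hpref0]
      have step4 : ∑ a ∈ RU.agents, g a = ∑ i ∈ RU.agents.attach, f (RU.pref i.1 i.2 x) := by
        rw [← Finset.sum_attach RU.agents g]
        refine Finset.sum_congr rfl (fun i _ => ?_)
        simp only [hg]
        rw [dif_pos (hmemU i.1 i.2)]
        have hpi : U.pref i.1 (hmemU i.1 i.2) = RU.pref i.1 i.2 := by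
          simp only [U, Profile.union]
          rw [dif_neg (hne0 i.1 i.2)]
        rw [hpi]
      rw [step1, step2, step3, step4, sumRU]
    -- positions
    have hposU : ∀ (i : {y // y ∈ U.agents}) (x : X),
        (U.pos i.1 i.2 x : ℝ) = ((U.pref i.1 i.2 x : ℕ) : ℝ) + 1 := by
      intro i x; unfold Profile.pos; push_cast; ring
    set f1 : Fin m → ℝ := fun k => ((k : ℕ) : ℝ) + 1 with hf1
    set f2 : Fin m → ℝ := fun k => (((k : ℕ) : ℝ) + 1) ^ 2 with hf2
    have hA : ∀ x : X, ∑ i ∈ U.agents.attach, (U.pos i.1 i.2 x : ℝ) =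
        f1 (e0 x) + ∑ r : Pref X, f1 (r x) := by
      intro x
      rw [Finset.sum_congr rfl (fun i _ => hposU i x)]
      exact sumU f1 x
    have hB : ∀ x : X, ∑ i ∈ U.agents.attach, (U.pos i.1 i.2 x : ℝ) ^ 2 =
        f2 (e0 x) + ∑ r : Pref X, f2 (r x) := by
      intro x
      rw [Finset.sum_congr rfl (fun i _ => by rw [hposU i x])]
      exact sumU f2 x
    have h0m : (0 : ℕ) < m := by omega
    have h1m : (1 : ℕ) < m := by omega
    set x1 : X := e0.symm ⟨0, h0m⟩ with hx1
    set x2 : X := e0.symm ⟨1, h1m⟩ with hx2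
    have he1 : ((e0 x1 : ℕ) : ℝ) = 0 := by rw [hx1, Equiv.apply_symm_apply]; simp
    have he2 : ((e0 x2 : ℕ) : ℝ) = 1 := by rw [hx2, Equiv.apply_symm_apply]; simp
    set Sp : ℝ := ∑ r : Pref X, f1 (r x1) with hSp
    set Qp : ℝ := ∑ r : Pref X, f2 (r x1) with hQp
    have hSp2 : ∑ r : Pref X, f1 (r x2) = Sp := sum_pref_swap f1 x2 x1
    have hQp2 : ∑ r : Pref X, f2 (r x2) = Qp := sum_pref_swap f2 x2 x1
    have hT := two_mul_sum_pref (X := X) x1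
    have hKpos : (0 : ℝ) < K := by exact_mod_cast hK
    have hSpval : 3 * (K : ℝ) < 2 * Sp := by
      have hsum : Sp = ((∑ r : Pref X, (r x1 : ℕ) : ℕ) : ℝ) + K := by
        rw [hSp]
        simp only [hf1]
        push_cast
        rw [Finset.sum_add_distrib, Finset.sum_const, Finset.card_univ]
        simp [hKdef]
      have hge : 2 * K ≤ 2 * (∑ r : Pref X, (r x1 : ℕ)) := by
        rw [hT]
        have h2m : 2 ≤ m - 1 := by omega
        calc 2 * K = K * 2 := by ring
          _ ≤ K * (m - 1) := Nat.mul_le_mul_left K h2m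
      have hcast : (2 * K : ℝ) ≤ 2 * ((∑ r : Pref X, (r x1 : ℕ) : ℕ) : ℝ) := by
        exact_mod_cast hge
      rw [hsum]; linarith
    have hlt : rankVar U x2 < rankVar U x1 := by
      rw [rankVar_eq, rankVar_eq, hA x1, hA x2, hB x1, hB x2, hSp2, hQp2, ← hSp, ← hQp,
        hcardU]
      simp only [hf1, hf2, he1, he2]
      rw [div_lt_div_iff₀ (by positivity) (by positivity)]
      have hne : (K : ℝ) + 1 ≠ 0 := by positivity
      field_simp
      nlinarith [hSpval, hKpos]
    have hattach : ({0} : Finset ℕ).attach = {⟨0, Finset.mem_singleton_self 0⟩} := by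
      ext a
      simp only [Finset.mem_attach, Finset.mem_singleton, true_iff]
      exact Subtype.ext (Finset.mem_singleton.mp a.2)
    have hvar0 : ∀ x : X, rankVar R x = 0 := by
      intro x
      unfold rankVar meanPos
      simp [R, hattach]
    have hRuniv : rankVarDSF R = Set.univ := by
      apply Set.eq_univ_iff_forall.mpr
      intro x y
      rw [hvar0 x, hvar0 y]
    intro heq
    have h2 : x2 ∈ rankVarDSF U := by
      rw [← heq, hRuniv]; trivial
    exact absurd (h2 x1) (not_le.mpr hlt)
end

section
/- Every profile-index-based DSF Δ_δ induced by a neutral profile index function δ satisfies Clone Consistency. -/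
open scoped Classical

lemma cycleRange_adj {n : ℕ} (a b c : Fin n)
    (hab : (a : ℕ) + 1 = (b : ℕ) ∨ (b : ℕ) + 1 = (a : ℕ)) :
    Fin.cycleRange b c = Fin.cycleRange a (Equiv.swap a b c) := by
  cases n with
  | zero => exact a.elim0
  | succ m =>
    rcases eq_or_ne c a with rfl | hca
    · rw [Equiv.swap_apply_left]
      rcases hab with h | h
      · rw [Fin.cycleRange_of_lt (show c < b by rw [Fin.lt_def]; omega),
          Fin.cycleRange_of_gt (show c < b by rw [Fin.lt_def]; omega)]
        apply Fin.ext
        rw [Fin.val_add_one_of_lt (lt_of_lt_of_le (show c < b by rw [Fin.lt_def]; omega)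
          (Fin.le_last b))]
        omega
      · rw [Fin.cycleRange_of_gt (show b < c by rw [Fin.lt_def]; omega),
          Fin.cycleRange_of_lt (show b < c by rw [Fin.lt_def]; omega)]
        apply Fin.ext
        rw [Fin.val_add_one_of_lt (lt_of_lt_of_le (show b < c by rw [Fin.lt_def]; omega)
          (Fin.le_last c))]
        omega
    · rcases eq_or_ne c b with rfl | hcb
      · rw [Equiv.swap_apply_right, Fin.cycleRange_self, Fin.cycleRange_self]
      · rw [Equiv.swap_apply_of_ne_of_ne hca hcb]
        have hva : (c : ℕ) ≠ (a : ℕ) := fun h => hca (Fin.ext h)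
        have hvb : (c : ℕ) ≠ (b : ℕ) := fun h => hcb (Fin.ext h)
        rcases (show ((c:ℕ) < a ∧ (c:ℕ) < b) ∨ ((a:ℕ) < c ∧ (b:ℕ) < c) by omega) with
          ⟨h1, h2⟩ | ⟨h1, h2⟩
        · rw [Fin.cycleRange_of_lt (Fin.lt_def.mpr h2), Fin.cycleRange_of_lt (Fin.lt_def.mpr h1)]
        · rw [Fin.cycleRange_of_gt (Fin.lt_def.mpr h2), Fin.cycleRange_of_gt (Fin.lt_def.mpr h1)]

/-- Every profile-index-based DSF `Δ_δ` induced by a neutral profile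
index function `δ` satisfies Clone Consistency. -/
theorem divisiveness_stmt3 (X : Type) [Fintype X]
    (δ : Profile X → ℝ) (hδ : NeutralIndex δ) :
    CloneConsistency (indexDSF δ) := by
  intro R x x' y hclone _ hx _
  have key : R.moveTop x' = (R.moveTop x).permute (Equiv.swap x x') := by
    unfold Profile.moveTop Profile.permute
    simp only [Profile.mk.injEq, heq_eq_eq, true_and]
    funext i hi
    apply Equiv.ext
    intro z
    simp only [Equiv.trans_apply]
    have h := cycleRange_adj (R.pref i hi x) (R.pref i hi x') (R.pref i hi z)
      (hclone.2 i hi)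
    rw [h]
    congr 1
    have hswap := Equiv.symm_trans_swap_trans x x' (R.pref i hi)
    have := congrArg (fun e => Equiv.toFun e (R.pref i hi z)) hswap
    simp only [Equiv.toFun_as_coe, Equiv.trans_apply, Equiv.symm_apply_apply] at this
    rw [← this]
    simp [Equiv.symm_swap]
  have heq : δ (R.moveTop x') = δ (R.moveTop x) := by
    rw [key]; exact hδ _ _
  intro y'
  rw [heq]
  exact hx y'
end

section
/- For every neutral profile index function δ, the profile-index-based DSF Δ_δ treats clones identically: for every profile R and proposals x and y that are clones in R, x ∈ Δ_δ(R) if and only if y ∈ Δ_δ(R). -/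
open scoped Classical

private lemma cycleRange_val' : ∀ {n : ℕ} (i j : Fin n), (Fin.cycleRange i j : ℕ) =
    if (j:ℕ) < (i:ℕ) then (j:ℕ)+1 else if (j:ℕ) = (i:ℕ) then 0 else (j:ℕ)
  | 0, i, _ => i.elim0
  | n+1, i, j => by
    rcases lt_trichotomy j i with h | h | h
    · rw [Fin.coe_cycleRange_of_lt h, if_pos (Fin.lt_def.mp h)]
    · subst h; rw [Fin.cycleRange_of_eq rfl]; simp
    · have h' := Fin.lt_def.mp h
      rw [Fin.cycleRange_of_gt h, if_neg (by omega), if_neg (by omega)]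

private lemma moveTop_clone {X : Type} [Fintype X] (R : Profile X) (x y : X)
    (h : R.Clones x y) :
    R.moveTop y = (R.moveTop x).permute (Equiv.swap x y) := by
  obtain ⟨hne, hadj⟩ := h
  unfold Profile.moveTop Profile.permute
  congr 1
  funext i hi
  have hxyv : ((R.pref i hi) x : ℕ) ≠ ((R.pref i hi) y : ℕ) :=
    fun hv => hne ((R.pref i hi).injective (Fin.ext hv))
  have hadj' := hadj i hi
  apply Equiv.ext
  intro z
  simp only [Equiv.trans_apply, Equiv.symm_swap]
  apply Fin.ext
  by_cases hzx : z = x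
  · subst hzx
    rw [Equiv.swap_apply_left, cycleRange_val', cycleRange_val']
    rcases hadj' with hc | hc <;> split_ifs <;> omega
  · by_cases hzy : z = y
    · subst hzy
      rw [Equiv.swap_apply_right, cycleRange_val', cycleRange_val']
      split_ifs <;> omega
    · rw [Equiv.swap_apply_of_ne_of_ne hzx hzy, cycleRange_val', cycleRange_val']
      have h1 : ((R.pref i hi) z : ℕ) ≠ ((R.pref i hi) x : ℕ) :=
        fun hv => hzx ((R.pref i hi).injective (Fin.ext hv))
      have h2 : ((R.pref i hi) z : ℕ) ≠ ((R.pref i hi) y : ℕ) :=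
        fun hv => hzy ((R.pref i hi).injective (Fin.ext hv))
      rcases hadj' with hc | hc <;> split_ifs <;> omega

/-- For every neutral profile index function `δ`, the DSF `Δ_δ` treats
clones identically: if `x` and `y` are clones in `R`, then `x ∈ Δ_δ(R) ↔ y ∈ Δ_δ(R)`. -/
theorem divisiveness_stmt4 (X : Type) [Fintype X]
    (δ : Profile X → ℝ) (hδ : NeutralIndex δ)
    (R : Profile X) (x y : X) (hxy : R.Clones x y) :
    x ∈ indexDSF δ R ↔ y ∈ indexDSF δ R := by
  have heq : δ (R.moveTop x) = δ (R.moveTop y) := by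
    rw [moveTop_clone R x y hxy, hδ]
  simp only [indexDSF, Set.mem_setOf_eq]
  constructor <;> intro h z
  · rw [← heq]; exact h z
  · rw [heq]; exact h z
end

section
/- For every m ≥ 3, no DSF can simultaneously satisfy Pareto Efficiency and Weak Position Unanimity. -/
open scoped Classical

/-- For every `m ≥ 3`, no DSF can simultaneously satisfy Pareto
Efficiency and Weak Position Unanimity. -/
theorem divisiveness_stmt5 (X : Type) [Fintype X] (hm : 3 ≤ Fintype.card X)
    (Δ : Profile X → Set X) (hΔ : IsDSF Δ) :
    ¬ (ParetoEfficiency Δ ∧ WeakPositionUnanimity Δ) := by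
  rintro ⟨hPE, hWPU⟩
  obtain r := Fintype.equivFin X
  set R : Profile X := ⟨{0}, ⟨0, Finset.mem_singleton_self 0⟩, fun _ _ => r⟩ with hR
  obtain ⟨x0, hx0⟩ := hΔ R
  have hsame : R.SamePos x0 := fun i hi j hj => rfl
  have huniv : Δ R = Set.univ := (hWPU R x0 hsame).resolve_left (fun h => h hx0)
  have hcard : 0 < Fintype.card X := by omega
  set xbot : X := r.symm ⟨Fintype.card X - 1, by omega⟩
  have hdom : R.ParetoDominated xbot := by
    refine ⟨r.symm ⟨0, hcard⟩, fun i hi => ?_⟩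
    show r (r.symm _) < r (r.symm _)
    simp only [Equiv.apply_symm_apply]
    exact Fin.mk_lt_mk.mpr (by omega)
  exact hPE R xbot hdom (huniv ▸ Set.mem_univ xbot)
end

section
/- For every m ≥ 3, no profile-index-based DSF Δ_δ induced by a neutral profile index function δ satisfies Position Unanimity. -/
open scoped Classical

------------------------------------------------------------------------
-- auxiliary lemmas

theorem myCoeCycleRange {n : ℕ} (i j : Fin n) :
    (Fin.cycleRange i j : ℕ) =
      if (j : ℕ) < i then (j : ℕ) + 1 else if (j : ℕ) = i then 0 else j := by
  cases n with
  | zero => exact j.elim0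
  | succ n =>
    rcases lt_trichotomy (j : ℕ) (i : ℕ) with h | h | h
    · rw [Fin.coe_cycleRange_of_lt h, if_pos h]
    · rw [Fin.cycleRange_of_eq (Fin.ext h), if_neg (by omega), if_pos h]; rfl
    · rw [Fin.cycleRange_of_gt h, if_neg (by omega), if_neg (by omega)]

theorem myCoeCycleRangeSymm {n : ℕ} (i j : Fin n) :
    ((Fin.cycleRange i).symm j : ℕ) =
      if (j : ℕ) = 0 then (i : ℕ) else if (j : ℕ) ≤ i then (j : ℕ) - 1 else j := by
  have h1 := myCoeCycleRange i ((Fin.cycleRange i).symm j)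
  rw [Equiv.apply_symm_apply] at h1
  have h2 : ((Fin.cycleRange i).symm j : ℕ) < n := Fin.is_lt _
  have h3 : (i : ℕ) < n := i.is_lt
  have h4 : (j : ℕ) < n := j.is_lt
  split_ifs at h1 ⊢ <;> omega

theorem myCoeNeg {n : ℕ} [NeZero n] (j : Fin n) :
    ((-j : Fin n) : ℕ) = if (j : ℕ) = 0 then 0 else n - j := by
  rw [Fin.coe_neg]
  have h4 : (j : ℕ) < n := j.is_lt
  split_ifs with h
  · rw [h, Nat.sub_zero, Nat.mod_self]
  · rw [Nat.mod_eq_of_lt (by omega)]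

set_option maxHeartbeats 1000000 in
theorem odd_key {n : ℕ} (t a j : Fin n) (ht : 2 * (t : ℕ) + 1 = n) :
    Fin.cycleRange a.rev j.rev =
      Fin.cycleRange t.rev (((Fin.cycleRange t).symm (Fin.cycleRange a j)).rev) := by
  have ha : (a : ℕ) < n := a.is_lt
  have hj : (j : ℕ) < n := j.is_lt
  have ht' : (t : ℕ) < n := t.is_lt
  apply Fin.ext
  simp only [myCoeCycleRange, myCoeCycleRangeSymm, Fin.val_rev]
  split_ifs <;> first | omega | exact (‹False›).elim

set_option maxHeartbeats 2000000 in
theorem even_key {n : ℕ} [NeZero n] (a b j : Fin n) (ha : (a : ℕ) ≠ 0) (hb : (b : ℕ) ≠ 0) :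
    Fin.cycleRange (-a) (-j) =
      Fin.cycleRange (-b) (-((Fin.cycleRange b).symm (Fin.cycleRange a j))) := by
  have ha' : (a : ℕ) < n := a.is_lt
  have hb' : (b : ℕ) < n := b.is_lt
  have hj : (j : ℕ) < n := j.is_lt
  obtain ⟨k, hkdef⟩ : ∃ k, (Fin.cycleRange b).symm (Fin.cycleRange a j) = k := ⟨_, rfl⟩
  rw [hkdef]
  have hk : (k : ℕ) =
      if (Fin.cycleRange a j : ℕ) = 0 then (b : ℕ)
      else if (Fin.cycleRange a j : ℕ) ≤ b then (Fin.cycleRange a j : ℕ) - 1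
      else (Fin.cycleRange a j : ℕ) := by rw [← hkdef]; exact myCoeCycleRangeSymm b _
  rw [myCoeCycleRange a j] at hk
  have hk' : (k : ℕ) < n := k.is_lt
  have e1 : ((-a : Fin n) : ℕ) = n - a := by rw [myCoeNeg, if_neg ha]
  have e2 : ((-b : Fin n) : ℕ) = n - b := by rw [myCoeNeg, if_neg hb]
  apply Fin.ext
  rw [myCoeCycleRange, myCoeCycleRange, e1, e2, myCoeNeg j, myCoeNeg k]
  split_ifs at hk ⊢ <;> first | omega | exact (‹False›).elim

section TwoAgent
variable {X : Type} [Fintype X]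

theorem my_profile_ext {R S : Profile X} (h : R.agents = S.agents)
    (h2 : ∀ i (hi : i ∈ R.agents) (hi' : i ∈ S.agents), R.pref i hi = S.pref i hi') :
    R = S := by
  obtain ⟨a, ane, ap⟩ := R
  obtain ⟨b, bne, bp⟩ := S
  simp only at h h2
  subst h
  simp only [Profile.mk.injEq, heq_eq_eq, true_and]
  funext i hi
  exact h2 i hi hi

def twoP (r1 r2 : Pref X) : Profile X where
  agents := {0, 1}
  agents_nonempty := ⟨0, by simp⟩
  pref i _ := if i = 0 then r1 else r2

theorem twoP_moveTop (r1 r2 : Pref X) (x : X) :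
    (twoP r1 r2).moveTop x =
      twoP (r1.trans (Fin.cycleRange (r1 x))) (r2.trans (Fin.cycleRange (r2 x))) := by
  refine my_profile_ext rfl ?_
  intro i hi hi'
  simp only [Profile.moveTop, twoP]
  by_cases h : i = 0 <;> simp [h]

theorem twoP_permute (r1 r2 : Pref X) (σ : X ≃ X) :
    (twoP r1 r2).permute σ = twoP (σ.symm.trans r1) (σ.symm.trans r2) := by
  refine my_profile_ext rfl ?_
  intro i hi hi'
  simp only [Profile.permute, twoP]
  by_cases h : i = 0 <;> simp [h]

theorem twoP_unan {r1 r2 : Pref X} (hu : (twoP r1 r2).IsUnanimous) : r1 = r2 := by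
  have h := hu 0 (by simp [twoP]) 1 (by simp [twoP])
  simpa [twoP] using h

theorem twoP_samePos {r1 r2 : Pref X} {x : X} (h : r1 x = r2 x) :
    (twoP r1 r2).SamePos x := by
  intro i hi j hj
  show (if i = 0 then r1 else r2) x = (if j = 0 then r1 else r2) x
  split_ifs <;> simp [h]

theorem key_eq (δ : Profile X → ℝ) (hδ : NeutralIndex δ) (r1 r2 : Pref X) (x y : X)
    (σ : X ≃ X)
    (h1 : r1.trans (Fin.cycleRange (r1 y)) = σ.symm.trans (r1.trans (Fin.cycleRange (r1 x))))
    (h2 : r2.trans (Fin.cycleRange (r2 y)) = σ.symm.trans (r2.trans (Fin.cycleRange (r2 x)))) :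
    δ ((twoP r1 r2).moveTop y) = δ ((twoP r1 r2).moveTop x) := by
  rw [twoP_moveTop r1 r2 y, twoP_moveTop r1 r2 x, h1, h2, ← twoP_permute]
  exact hδ _ σ

end TwoAgent


/-- For every `m ≥ 3`, no profile-index-based DSF `Δ_δ` induced by a
neutral profile index function `δ` satisfies Position Unanimity. -/
theorem divisiveness_stmt6 (X : Type) [Fintype X] (hm : 3 ≤ Fintype.card X)
    (δ : Profile X → ℝ) (hδ : NeutralIndex δ) :
    ¬ PositionUnanimity (indexDSF δ) := by
  intro hPU
  set e : Pref X := Fintype.equivFin X with he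
  rcases Nat.even_or_odd (Fintype.card X) with hev | hod
  · -- even case
    obtain ⟨t, ht⟩ := hev
    have ht2 : 2 ≤ t := by omega
    haveI : NeZero (Fintype.card X) := ⟨by omega⟩
    set r2 : Pref X := e.trans (Equiv.neg (Fin (Fintype.card X))) with hr2
    set tF : Fin (Fintype.card X) := ⟨t, by omega⟩ with htF
    set zF : Fin (Fintype.card X) := ⟨0, by omega⟩ with hzF
    set x0 : X := e.symm zF with hx0
    set xt : X := e.symm tF with hxt
    have htFne : (tF : ℕ) ≠ 0 := by simp [htF]; omega
    have hr2xt : r2 xt = -tF := by simp [hr2, hxt]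
    have hr2x0 : r2 x0 = zF := by
      simp only [hr2, hx0, Equiv.trans_apply, Equiv.apply_symm_apply, Equiv.neg_apply]
      apply Fin.ext
      rw [myCoeNeg, if_pos (by simp [hzF])]
    have hnegtF : (-tF : Fin (Fintype.card X)) = tF := by
      apply Fin.ext
      rw [myCoeNeg, if_neg htFne]
      simp [htF]; omega
    have hne : e ≠ r2 := by
      intro hcon
      have h1 := congrArg (fun f : Pref X => (f (e.symm ⟨1, by omega⟩) : ℕ)) hcon
      simp only [hr2, Equiv.trans_apply, Equiv.apply_symm_apply, Equiv.neg_apply] at h1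
      rw [myCoeNeg, if_neg (by simp)] at h1
      simp at h1
      omega
    have hsp0 : (twoP e r2).SamePos x0 := twoP_samePos (by
      rw [hr2x0]; simp [hx0])
    have hspt : (twoP e r2).SamePos xt := twoP_samePos (by
      rw [hr2xt, hnegtF]; simp [hxt])
    have hnu : ¬ (twoP e r2).IsUnanimous := fun hu => hne (twoP_unan hu)
    -- all moveTops at y with e y ≠ 0 have the same δ-value as moveTop xt
    have hall : ∀ y : X, (e y : ℕ) ≠ 0 →
        δ ((twoP e r2).moveTop y) = δ ((twoP e r2).moveTop xt) := by
      intro y hy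
      apply key_eq δ hδ e r2 xt y
        (((e.trans (Fin.cycleRange (e y))).trans (Fin.cycleRange tF).symm).trans e.symm).symm
      · apply Equiv.ext; intro z
        simp only [Equiv.symm_symm, Equiv.trans_apply, Equiv.apply_symm_apply, hxt]
      · apply Equiv.ext; intro z
        simp only [Equiv.symm_symm, Equiv.trans_apply, Equiv.apply_symm_apply, hr2xt,
          hr2, Equiv.neg_apply, hxt]
        exact even_key (e y) tF (e z) hy htFne
    -- PU at x0
    have hx0not := hPU (twoP e r2) x0 hnu hsp0
    simp only [indexDSF, Set.mem_setOf_eq] at hx0not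
    push_neg at hx0not
    obtain ⟨y, hy⟩ := hx0not
    have hy0 : (e y : ℕ) ≠ 0 := by
      intro h0
      have : y = x0 := by
        rw [hx0]
        apply e.injective
        simp only [Equiv.apply_symm_apply]
        exact Fin.ext (by simpa [hzF] using h0)
      rw [this] at hy
      exact lt_irrefl _ hy
    rw [hall y hy0] at hy
    -- PU at xt
    have hxtnot := hPU (twoP e r2) xt hnu hspt
    simp only [indexDSF, Set.mem_setOf_eq] at hxtnot
    push_neg at hxtnot
    obtain ⟨y', hy'⟩ := hxtnot
    by_cases hy'0 : (e y' : ℕ) = 0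
    · have : y' = x0 := by
        rw [hx0]
        apply e.injective
        simp only [Equiv.apply_symm_apply]
        exact Fin.ext (by simpa [hzF] using hy'0)
      rw [this] at hy'
      exact absurd hy (asymm hy')
    · rw [hall y' hy'0] at hy'
      exact lt_irrefl _ hy'
  · -- odd case
    obtain ⟨t, ht⟩ := hod
    set tF : Fin (Fintype.card X) := ⟨t, by omega⟩ with htF
    set r2 : Pref X := e.trans Fin.revPerm with hr2
    set x : X := e.symm tF with hx
    have htFv : (tF : ℕ) = t := rfl
    have hr2x : r2 x = Fin.rev tF := by simp [hr2, hx]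
    have hrevtF : Fin.rev tF = tF := by
      apply Fin.ext
      rw [Fin.val_rev]
      simp [htF]; omega
    have hne : e ≠ r2 := by
      intro hcon
      have h1 := congrArg (fun f : Pref X => (f (e.symm ⟨0, by omega⟩) : ℕ)) hcon
      simp only [hr2, Equiv.trans_apply, Equiv.apply_symm_apply, Fin.revPerm_apply,
        Fin.val_rev] at h1
      simp at h1
      omega
    have hsp : (twoP e r2).SamePos x := twoP_samePos (by
      rw [hr2x, hrevtF]; simp [hx])
    have hnu : ¬ (twoP e r2).IsUnanimous := fun hu => hne (twoP_unan hu)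
    have hall : ∀ y : X,
        δ ((twoP e r2).moveTop y) = δ ((twoP e r2).moveTop x) := by
      intro y
      apply key_eq δ hδ e r2 x y
        (((e.trans (Fin.cycleRange (e y))).trans (Fin.cycleRange tF).symm).trans e.symm).symm
      · apply Equiv.ext; intro z
        simp only [Equiv.symm_symm, Equiv.trans_apply, Equiv.apply_symm_apply, hx]
      · apply Equiv.ext; intro z
        simp only [Equiv.symm_symm, Equiv.trans_apply, Equiv.apply_symm_apply, hr2x,
          hr2, Fin.revPerm_apply, hx]
        exact odd_key tF (e y) (e z) (by rw [htFv]; omega)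
    have hxin : x ∈ indexDSF δ (twoP e r2) := by
      simp only [indexDSF, Set.mem_setOf_eq]
      intro y
      rw [hall y]
    exact hPU (twoP e r2) x hnu hsp hxin
end

section
/- For every m ≥ 3, no DSF can simultaneously satisfy Anonymity, Neutrality, Clone Consistency, and Position Unanimity. -/
open scoped Classical

private lemma Profile.ext'_s7 {X : Type} [Fintype X] {P Q : Profile X}
    (h : P.agents = Q.agents)
    (h2 : ∀ i (hi : i ∈ P.agents) (hi' : i ∈ Q.agents), P.pref i hi = Q.pref i hi') :
    P = Q := by
  obtain ⟨A, hA, p⟩ := P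
  obtain ⟨A', hA', p'⟩ := Q
  dsimp only at h
  subst h
  simp only [Profile.mk.injEq, heq_eq_eq, true_and]
  funext i hi
  exact h2 i hi hi

/-- For every `m ≥ 3`, no DSF can simultaneously satisfy Anonymity,
Neutrality, Clone Consistency, and Position Unanimity. -/
theorem divisiveness_stmt7 (X : Type) [Fintype X] (hm : 3 ≤ Fintype.card X)
    (Δ : Profile X → Set X) (hΔ : IsDSF Δ) :
    ¬ (Anonymity Δ ∧ Neutrality Δ ∧ CloneConsistency Δ ∧ PositionUnanimity Δ) := by
  rintro ⟨hAn, hNe, hCl, hPU⟩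
  classical
  set m := Fintype.card X with hmdef
  let e : X ≃ Fin m := Fintype.equivFin X
  let p0 : Fin m := ⟨0, by omega⟩
  let p1 : Fin m := ⟨1, by omega⟩
  let p2 : Fin m := ⟨2, by omega⟩
  have hp01 : p0 ≠ p1 := by simp [p0, p1, Fin.ext_iff]
  have hp02 : p0 ≠ p2 := by simp [p0, p2, Fin.ext_iff]
  have hp12 : p1 ≠ p2 := by simp [p1, p2, Fin.ext_iff]
  let a : X := e.symm p0
  let b : X := e.symm p1
  let c : X := e.symm p2
  have hea : e a = p0 := e.apply_symm_apply p0
  have heb : e b = p1 := e.apply_symm_apply p1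
  have hec : e c = p2 := e.apply_symm_apply p2
  have hab : a ≠ b := fun h => hp01 (by rw [← hea, ← heb, h])
  have hac : a ≠ c := fun h => hp02 (by rw [← hea, ← hec, h])
  have hbc : b ≠ c := fun h => hp12 (by rw [← heb, ← hec, h])
  let r1 : Pref X := e
  let r2 : Pref X := e.trans (Equiv.swap p0 p2)
  let R : Profile X := ⟨{0, 1}, by simp, fun i _ => if i = 0 then r1 else r2⟩
  have hRag : R.agents = {0, 1} := rfl
  have h0mem : (0 : ℕ) ∈ R.agents := by simp [hRag]
  have h1mem : (1 : ℕ) ∈ R.agents := by simp [hRag]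
  have hpref : ∀ i (hi : i ∈ R.agents), R.pref i hi = if i = 0 then r1 else r2 :=
    fun _ _ => rfl
  have hpref0 : ∀ (hi : (0:ℕ) ∈ R.agents), R.pref 0 hi = r1 := fun _ => rfl
  have hpref1 : ∀ (hi : (1:ℕ) ∈ R.agents), R.pref 1 hi = r2 := fun _ => rfl
  -- values of r2
  have hr2 : ∀ x : X, r2 x = Equiv.swap p0 p2 (e x) := fun _ => rfl
  have hr2a : r2 a = p2 := by rw [hr2, hea, Equiv.swap_apply_left]
  have hr2c : r2 c = p0 := by rw [hr2, hec, Equiv.swap_apply_right]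
  have hr2b : r2 b = p1 := by
    rw [hr2, heb, Equiv.swap_apply_of_ne_of_ne (Ne.symm hp01) hp12]
  -- every agent's preference applied, uniformly
  have hprefval : ∀ i (hi : i ∈ R.agents) (x : X),
      R.pref i hi x = if i = 0 then e x else Equiv.swap p0 p2 (e x) := by
    intro i hi x
    rw [hpref i hi]
    by_cases h : i = 0 <;> simp [h, r1, hr2]
  -- proposals other than a and c occupy the same position everywhere
  have hsame : ∀ x : X, e x ≠ p0 → e x ≠ p2 → R.SamePos x := by
    intro x hx0 hx2 i hi j hj
    rw [hprefval i hi, hprefval j hj, Equiv.swap_apply_of_ne_of_ne hx0 hx2]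
    by_cases h : i = 0 <;> by_cases h' : j = 0 <;> simp [h, h']
  -- the profile is not unanimous
  have hnotU : ¬ R.IsUnanimous := by
    intro h
    have := congrArg (fun f => f a) (h 0 h0mem 1 h1mem)
    rw [hpref0, hpref1] at this
    simp only [r1] at this
    rw [hea, hr2a] at this
    exact hp02 this
  -- a and b are clones
  have hclab : R.Clones a b := by
    refine ⟨hab, fun i hi => ?_⟩
    rcases Finset.mem_insert.mp hi with h | h
    · left
      rw [hprefval i hi, hprefval i hi, if_pos h, if_pos h, hea, heb]
    · right
      have h1 : i = 1 := by simpa using h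
      have hne : i ≠ 0 := by omega
      rw [hprefval i hi, hprefval i hi, if_neg hne, if_neg hne, hea, heb,
        Equiv.swap_apply_left, Equiv.swap_apply_of_ne_of_ne (Ne.symm hp01) hp12]
  -- a and c are not clones
  have hnclac : ¬ R.Clones a c := by
    rintro ⟨-, h⟩
    have := h 0 h0mem
    rw [hprefval 0 h0mem, hprefval 0 h0mem, if_pos rfl, if_pos rfl, hea, hec] at this
    simp only [p0, p2] at this
    omega
  -- symmetry: swapping a and c corresponds to swapping the two agents
  let σ : X ≃ X := Equiv.swap a c
  let τ : ℕ ≃ ℕ := Equiv.swap 0 1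
  have hswap_comm : ∀ x : X, e (σ x) = Equiv.swap p0 p2 (e x) := by
    intro x
    by_cases hxa : x = a
    · subst hxa
      rw [show σ a = c from Equiv.swap_apply_left a c, hec, hea, Equiv.swap_apply_left]
    by_cases hxc : x = c
    · subst hxc
      rw [show σ c = a from Equiv.swap_apply_right a c, hea, hec, Equiv.swap_apply_right]
    · have h0 : e x ≠ p0 := fun h => hxa (by rw [← e.symm_apply_apply x, h])
      have h2 : e x ≠ p2 := fun h => hxc (by rw [← e.symm_apply_apply x, h])
      rw [show σ x = x from Equiv.swap_apply_of_ne_of_ne hxa hxc,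
        Equiv.swap_apply_of_ne_of_ne h0 h2]
  have hPQ : R.permute σ = R.comp τ := by
    apply Profile.ext'_s7
    · show R.agents = R.agents.map τ.symm.toEmbedding
      rw [hRag]
      ext i
      simp only [Finset.mem_map_equiv, Equiv.symm_symm, Finset.mem_insert,
        Finset.mem_singleton]
      have hτi : τ i = if i = 0 then 1 else if i = 1 then 0 else i := by
        simp [τ, Equiv.swap_apply_def]
      rw [hτi]
      split_ifs with h1 h2 <;> omega
    · intro i hi hi'
      have hiR : i ∈ R.agents := hi
      have hτi : τ i ∈ R.agents := by
        have h'' := hi'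
        simp only [Profile.comp, Finset.mem_map_equiv, Equiv.symm_symm] at h''
        exact h''
      have hRHS : (R.comp τ).pref i hi' = R.pref (τ i) hτi := rfl
      rw [hRHS]
      have hσs : σ.symm = σ := Equiv.symm_swap a c
      apply Equiv.ext
      intro x
      have hL : ((R.permute σ).pref i hi) x = (R.pref i hiR) (σ x) := by
        show (σ.symm.trans (R.pref i hiR)) x = _
        rw [hσs]; rfl
      rw [hL, hprefval i hiR, hprefval (τ i) hτi]
      have hτ0 : τ 0 = 1 := Equiv.swap_apply_left 0 1
      have hτ1 : τ 1 = 0 := Equiv.swap_apply_right 0 1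
      rcases Finset.mem_insert.mp hiR with h | h
      · subst h
        rw [if_pos rfl, if_neg (by omega : τ 0 ≠ 0)]
        exact hswap_comm x
      · have h1 : i = 1 := by simpa using h
        subst h1
        rw [if_neg (by omega : (1:ℕ) ≠ 0), if_pos hτ1, hswap_comm x,
          Equiv.swap_apply_self]
  -- hence Δ R is invariant under σ
  have hinv : Δ R = σ '' Δ R := by
    rw [← hNe R σ, hPQ, ← hAn R τ]
  -- only a and c can be selected
  have hmem_ac : ∀ z ∈ Δ R, z = a ∨ z = c := by
    intro z hz
    by_contra h
    push_neg at h
    have h0 : e z ≠ p0 := fun hh => h.1 (by rw [← e.symm_apply_apply z, hh])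
    have h2 : e z ≠ p2 := fun hh => h.2 (by rw [← e.symm_apply_apply z, hh])
    exact hPU R z hnotU (hsame z h0 h2) hz
  obtain ⟨z, hz⟩ := hΔ R
  have hzσ : σ z ∈ Δ R := by rw [hinv]; exact ⟨z, hz, rfl⟩
  have hainD : a ∈ Δ R ∧ c ∈ Δ R := by
    rcases hmem_ac z hz with h | h
    · refine ⟨h ▸ hz, ?_⟩
      have hzc : σ z = c := by rw [h]; exact Equiv.swap_apply_left a c
      rwa [hzc] at hzσ
    · refine ⟨?_, h ▸ hz⟩
      have hza : σ z = a := by rw [h]; exact Equiv.swap_apply_right a c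
      rwa [hza] at hzσ
  have hbin : b ∈ Δ R := hCl R a b c hclab hnclac hainD.1 hainD.2
  have hb0 : e b ≠ p0 := by rw [heb]; exact Ne.symm hp01
  have hb2 : e b ≠ p2 := by rw [heb]; exact hp12
  exact hPU R b hnotU (hsame b hb0 hb2) hbin
end

section
/- For every m ≥ 2, no DSF can simultaneously satisfy Inversion Invariance and Pareto Efficiency. -/
open scoped Classical

/-- For every `m ≥ 2`, no DSF can simultaneously satisfy Inversion
Invariance and Pareto Efficiency. -/
theorem divisiveness_stmt8 (X : Type) [Fintype X] (hm : 2 ≤ Fintype.card X)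
    (Δ : Profile X → Set X) (hΔ : IsDSF Δ) :
    ¬ (InversionInvariance Δ ∧ ParetoEfficiency Δ) := by
  rintro ⟨hinv, hpe⟩
  have hpos : (0 : ℕ) < Fintype.card X := by omega
  set r : Pref X := Fintype.equivFin X with hr
  set R : Profile X := ⟨{0}, ⟨0, by simp⟩, fun _ _ => r⟩ with hR
  obtain ⟨x, hx⟩ := hΔ R
  -- x must be the top proposal of r
  have hrx : r x = ⟨0, hpos⟩ := by
    by_contra h
    refine hpe R x ⟨r.symm ⟨0, hpos⟩, fun i hi => ?_⟩ hx
    show r (r.symm ⟨0, hpos⟩) < r x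
    rw [Equiv.apply_symm_apply]
    have : (r x).val ≠ 0 := fun hv => h (Fin.ext hv)
    refine Fin.lt_def.mpr ?_
    simp only [Fin.val_mk]
    omega
  -- but then x is Pareto-dominated in the inverted profile
  have hdom : R.invert.ParetoDominated x := by
    refine ⟨r.symm ⟨1, hm⟩, fun i hi => ?_⟩
    show (r.trans Fin.revPerm) (r.symm ⟨1, hm⟩) < (r.trans Fin.revPerm) x
    simp only [Equiv.trans_apply, Fin.revPerm_apply, Equiv.apply_symm_apply, hrx]
    exact Fin.rev_lt_rev.mpr (Fin.mk_lt_mk.mpr one_pos)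
  exact hpe R.invert x hdom (hinv R ▸ hx)
end

section
/- For every m ≥ 3, no DSF can simultaneously satisfy Weak Pareto Efficiency and Position Unanimity. -/
open scoped Classical

/-- For every `m ≥ 3`, no DSF can simultaneously satisfy Weak Pareto
Efficiency and Position Unanimity. -/
theorem divisiveness_stmt9 (X : Type) [Fintype X] (hm : 3 ≤ Fintype.card X)
    (Δ : Profile X → Set X) (hΔ : IsDSF Δ) :
    ¬ (WeakParetoEfficiency Δ ∧ PositionUnanimity Δ) := by
  rintro ⟨hWP, hPU⟩
  haveI : NeZero (Fintype.card X) := ⟨by omega⟩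
  set n := Fintype.card X with hn
  let e : X ≃ Fin n := Fintype.equivFin X
  let i1 : Fin n := ⟨1, by omega⟩
  let i2 : Fin n := ⟨2, by omega⟩
  let σ : Fin n ≃ Fin n := Equiv.swap i1 i2
  let R : Profile X :=
    ⟨{0, 1}, ⟨0, by simp⟩, fun i _ => if i = 0 then e else e.trans σ⟩
  let a : X := e.symm 0
  have h0mem : (0 : ℕ) ∈ R.agents := by simp [R]
  have h1mem : (1 : ℕ) ∈ R.agents := by simp [R]
  have hi1ne : i1 ≠ i2 := by simp [i1, i2, Fin.ext_iff]
  have h0i1 : (0 : Fin n) ≠ i1 := by simp [i1, Fin.ext_iff]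
  have h0i2 : (0 : Fin n) ≠ i2 := by simp [i2, Fin.ext_iff]
  -- every agent ranks a at position 0
  have hpa : ∀ i (hi : i ∈ R.agents), R.pref i hi a = 0 := by
    intro i hi
    by_cases h : i = 0
    · subst h
      show (if (0 : ℕ) = 0 then e else e.trans σ) a = 0
      simp [a]
    · show (if i = 0 then e else e.trans σ) a = 0
      rw [if_neg h]
      show σ (e a) = 0
      have hea : e a = 0 := by simp [a]
      rw [hea]
      exact Equiv.swap_apply_of_ne_of_ne h0i1 h0i2
  -- R is not unanimous
  have hnotU : ¬ R.IsUnanimous := by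
    intro H
    have h01 := H 0 h0mem 1 h1mem
    have : (if (0 : ℕ) = 0 then e else e.trans σ) = (if (1 : ℕ) = 0 then e else e.trans σ) := h01
    rw [if_pos rfl, if_neg one_ne_zero] at this
    have := congrArg (fun f : Pref X => f (e.symm i1)) this
    simp only [Equiv.trans_apply, Equiv.apply_symm_apply] at this
    rw [Equiv.swap_apply_left] at this
    exact hi1ne this
  -- a has the same position everywhere
  have hsp : R.SamePos a := fun i hi j hj => by rw [hpa i hi, hpa j hj]
  have haNot : a ∉ Δ R := hPU R a hnotU hsp
  obtain ⟨x, hx⟩ := hΔ R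
  by_cases hxa : x = a
  · exact haNot (hxa ▸ hx)
  · have hdom : R.ParetoDominated x := by
      refine ⟨a, fun i hi => ?_⟩
      rw [hpa i hi]
      have hne : R.pref i hi x ≠ 0 := fun h =>
        hxa ((R.pref i hi).injective (by rw [h, hpa i hi]))
      have hv : (R.pref i hi x).val ≠ 0 := fun h => hne (Fin.ext (by simp [h]))
      exact Fin.lt_def.mpr (by simpa using Nat.pos_of_ne_zero hv)
    rcases hWP R x hdom with h | h
    · exact h hx
    · exact haNot (h ▸ Set.mem_univ a)
end
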